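/- arXiv:1703.04035 — 2 statements merged into one kernel-verified Lean document; each statement's English description precedes it below -/
import Mathlib

section
/- Let x_1, ..., x_m be nonzero vectors in R^d, at least two of which are not collinear. Define D as the dm x dm block-diagonal matrix with diagonal blocks P(x_1), ..., P(x_m), F as the dm x d block column matrix with blocks P(x_1), ..., P(x_m), and E = sum_i P(x_i). Then the Schur complement H = D - F E^{-1} F^T is symmetric positive semi-definite, has rank dm - m - d, and every nonzero eigenvalue of H equals 1. -/
/-!
`D` is an orthogonal projection (block diagonal with the projections `P(xᵢ)`), `D F = F` and
`Fᵀ F = E`. Hence `F E⁻¹ Fᵀ` is the orthogonal projection onto the column space of `F`, which lies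
in the range of `D`, so the Schur complement `H = D - F E⁻¹ Fᵀ` is again an orthogonal projection.
Orthogonal projections are positive semidefinite, have eigenvalues in `{0, 1}` and rank equal to
their trace, and `tr H = tr D - tr (F E⁻¹ Fᵀ) = m (d - 1) - d`. Invertibility of `E` is where
non-collinearity enters: `E v = 0` forces `P(xᵢ) v = 0`, i.e. `v ∥ xᵢ`, for every `i`.
-/

open Matrix

/-- The orthogonal projection matrix `P(x) = I - x xᵀ / ‖x‖²`. -/
noncomputable def proj {d : ℕ} (x : Fin d → ℝ) : Matrix (Fin d) (Fin d) ℝ :=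
  1 - (x ⬝ᵥ x)⁻¹ • Matrix.vecMulVec x x

namespace Matrix

variable {m n : Type*}

section PosSemidef

open scoped ComplexOrder MatrixOrder

variable [Fintype n] {𝕜 : Type*} [RCLike 𝕜]

theorem IsStarProjection.posSemidef [DecidableEq n] {P : Matrix n n 𝕜}
    (hP : IsStarProjection P) : P.PosSemidef :=
  hP.nonneg.posSemidef

theorem PosSemidef.mulVec_eq_zero_of_sum_mulVec_eq_zero {ι : Type*} {s : Finset ι}
    {A : ι → Matrix n n 𝕜} (hA : ∀ i ∈ s, (A i).PosSemidef) {v : n → 𝕜}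
    (hv : (∑ i ∈ s, A i) *ᵥ v = 0) : ∀ i ∈ s, A i *ᵥ v = 0 := by
  have hsum : ∑ i ∈ s, star v ⬝ᵥ (A i *ᵥ v) = 0 := by
    rw [← dotProduct_sum, ← sum_mulVec, hv, dotProduct_zero]
  intro i hi
  rw [← (hA i hi).dotProduct_mulVec_zero_iff]
  exact (Finset.sum_eq_zero_iff_of_nonneg fun j hj => (hA j hj).dotProduct_mulVec_nonneg v).mp
    hsum i hi

end PosSemidef

section Idempotent

variable [Fintype n] {K : Type*} [Field K]

theorem IsIdempotentElem.rank_eq_trace [DecidableEq n] {P : Matrix n n K}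
    (hP : IsIdempotentElem P) : (P.rank : K) = P.trace := by
  have hproj : LinearMap.IsProj (LinearMap.range (toLin' P)) (toLin' P) :=
    LinearMap.IsIdempotentElem.isProj_range _ (hP.map toLinAlgEquiv')
  rw [rank, ← toLin'_apply', ← hproj.trace, LinearMap.trace_eq_matrix_trace K (Pi.basisFun K n),
    LinearMap.toMatrix_eq_toMatrix', LinearMap.toMatrix'_toLin']

theorem IsIdempotentElem.eq_zero_or_one_of_mulVec_eq_smul {P : Matrix n n K}
    (hP : IsIdempotentElem P) {μ : K} {z : n → K} (hz : z ≠ 0)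
    (hμ : P *ᵥ z = μ • z) : μ = 0 ∨ μ = 1 := by
  have hsq : (μ * μ) • z = μ • z := by
    rw [mul_smul, ← hμ, ← mulVec_smul, ← hμ, mulVec_mulVec, hP.eq]
  exact IsIdempotentElem.iff_eq_zero_or_one.mp (smul_left_injective K hz hsq)

end Idempotent

section SchurComplement

variable [Fintype m] [Fintype n] {R : Type*} [CommRing R] [StarRing R] [DecidableEq n]

theorem isStarProjection_mul_inv_mul_conjTranspose {F : Matrix m n R}
    (hF : IsUnit (Fᴴ * F).det) : IsStarProjection (F * (Fᴴ * F)⁻¹ * Fᴴ) where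
  isSelfAdjoint := by
    rw [IsSelfAdjoint, star_eq_conjTranspose, conjTranspose_mul, conjTranspose_mul,
      conjTranspose_conjTranspose, conjTranspose_nonsing_inv, conjTranspose_mul,
      conjTranspose_conjTranspose, Matrix.mul_assoc]
  isIdempotentElem := by
    rw [IsIdempotentElem]
    calc F * (Fᴴ * F)⁻¹ * Fᴴ * (F * (Fᴴ * F)⁻¹ * Fᴴ)
        = F * (Fᴴ * F)⁻¹ * (Fᴴ * F) * (Fᴴ * F)⁻¹ * Fᴴ := by simp only [Matrix.mul_assoc]
      _ = F * (Fᴴ * F)⁻¹ * Fᴴ := by rw [nonsing_inv_mul_cancel_right _ _ hF]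

theorem trace_mul_inv_mul_conjTranspose {F : Matrix m n R} (hF : IsUnit (Fᴴ * F).det) :
    (F * (Fᴴ * F)⁻¹ * Fᴴ).trace = Fintype.card n := by
  rw [trace_mul_comm, ← Matrix.mul_assoc, mul_nonsing_inv _ hF, trace_one]

theorem IsStarProjection.sub_mul_inv_mul_conjTranspose {D : Matrix m m R}
    (hD : IsStarProjection D) {F : Matrix m n R} (hDF : D * F = F)
    (hF : IsUnit (Fᴴ * F).det) : IsStarProjection (D - F * (Fᴴ * F)⁻¹ * Fᴴ) := by
  refine (isStarProjection_mul_inv_mul_conjTranspose hF).sub_of_mul_eq_left hD ?_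
  have hFD : Fᴴ * D = Fᴴ := by
    rw [← hD.isSelfAdjoint.star_eq, star_eq_conjTranspose, ← conjTranspose_mul, hDF]
  rw [Matrix.mul_assoc, hFD]

end SchurComplement

section BlockMatrix

variable {ι α : Type*}

-- Mathlib's `Matrix.blockDiagonal` indexes by `n × ι`, with the block index second.
def blockDiagonalFst [DecidableEq ι] [Zero α] (P : ι → Matrix n n α) :
    Matrix (ι × n) (ι × n) α :=
  of fun q r => if q.1 = r.1 then P q.1 q.2 r.2 else 0

def blockColumn (P : ι → Matrix n n α) : Matrix (ι × n) n α :=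
  of fun q b => P q.1 q.2 b

theorem conjTranspose_blockDiagonalFst [DecidableEq ι] [AddMonoid α] [StarAddMonoid α]
    (P : ι → Matrix n n α) : (blockDiagonalFst P)ᴴ = blockDiagonalFst fun i => (P i)ᴴ := by
  ext ⟨i, a⟩ ⟨j, c⟩
  by_cases h : i = j
  · subst h
    simp [blockDiagonalFst]
  · simp [blockDiagonalFst, h, Ne.symm h]

variable [Fintype ι] [Fintype n] [Semiring α]

theorem conjTranspose_blockColumn_mul_blockColumn [StarRing α] (P Q : ι → Matrix n n α) :
    (blockColumn P)ᴴ * blockColumn Q = ∑ i, (P i)ᴴ * Q i := by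
  ext a c
  simp [blockColumn, mul_apply, Fintype.sum_prod_type, sum_apply]

variable [DecidableEq ι]

theorem blockDiagonalFst_mul_apply {o : Type*} (P : ι → Matrix n n α) (M : Matrix (ι × n) o α)
    (i : ι) (a : n) (c : o) :
    (blockDiagonalFst P * M) (i, a) c = ∑ b, P i a b * M (i, b) c := by
  rw [mul_apply, Fintype.sum_prod_type, Finset.sum_eq_single i]
  · simp [blockDiagonalFst]
  · intro j _ hj
    simp [blockDiagonalFst, Ne.symm hj]
  · simp

theorem blockDiagonalFst_mul_blockDiagonalFst (P Q : ι → Matrix n n α) :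
    blockDiagonalFst P * blockDiagonalFst Q = blockDiagonalFst fun i => P i * Q i := by
  ext ⟨i, a⟩ ⟨j, c⟩
  rw [blockDiagonalFst_mul_apply]
  by_cases h : i = j
  · subst h
    simp [blockDiagonalFst, mul_apply]
  · simp [blockDiagonalFst, h]

theorem blockDiagonalFst_mul_blockColumn (P Q : ι → Matrix n n α) :
    blockDiagonalFst P * blockColumn Q = blockColumn fun i => P i * Q i := by
  ext ⟨i, a⟩ c
  rw [blockDiagonalFst_mul_apply]
  simp [blockColumn, mul_apply]

theorem trace_blockDiagonalFst (P : ι → Matrix n n α) :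
    (blockDiagonalFst P).trace = ∑ i, (P i).trace := by
  simp [trace, blockDiagonalFst, Fintype.sum_prod_type]

theorem IsStarProjection.blockDiagonalFst [StarRing α] {P : ι → Matrix n n α}
    (hP : ∀ i, IsStarProjection (P i)) : IsStarProjection (blockDiagonalFst P) where
  isSelfAdjoint := by
    rw [IsSelfAdjoint, star_eq_conjTranspose, conjTranspose_blockDiagonalFst]
    exact congrArg _ (funext fun i => (hP i).isSelfAdjoint)
  isIdempotentElem := by
    rw [IsIdempotentElem, blockDiagonalFst_mul_blockDiagonalFst]
    exact congrArg _ (funext fun i => (hP i).isIdempotentElem)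

end BlockMatrix

end Matrix

section Proj

variable {d : ℕ}

theorem isStarProjection_proj (x : Fin d → ℝ) : IsStarProjection (proj x) := by
  refine IsStarProjection.one_sub ⟨?_, ?_⟩
  · rw [IsIdempotentElem, smul_mul_smul_comm, vecMulVec_mul_vecMulVec, vecMulVec_smul, smul_smul]
    congr 1
    rcases eq_or_ne (x ⬝ᵥ x) 0 with h | h
    · simp [h]
    · field_simp
  · rw [IsSelfAdjoint, star_eq_conjTranspose, conjTranspose_smul, conjTranspose_vecMulVec]
    simp

theorem trace_proj {x : Fin d → ℝ} (hx : x ≠ 0) : (proj x).trace = d - 1 := by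
  rw [proj, trace_sub, trace_smul, trace_vecMulVec, trace_one, Fintype.card_fin, smul_eq_mul,
    inv_mul_cancel₀ (dotProduct_self_eq_zero.not.mpr hx)]

theorem exists_eq_smul_of_proj_mulVec_eq_zero {x v : Fin d → ℝ} (hv : proj x *ᵥ v = 0) :
    ∃ c : ℝ, v = c • x := by
  refine ⟨(x ⬝ᵥ x)⁻¹ * (x ⬝ᵥ v), ?_⟩
  rwa [proj, sub_mulVec, one_mulVec, smul_mulVec, vecMulVec_mulVec, op_smul_eq_smul,
    sub_eq_zero, smul_smul] at hv

end Proj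

theorem isUnit_det_sum_proj {ι : Type*} [Fintype ι] {d : ℕ} {x : ι → Fin d → ℝ}
    (hnc : ¬ ∃ v : Fin d → ℝ, ∀ i, ∃ c : ℝ, x i = c • v) : IsUnit (∑ i, proj (x i)).det := by
  rw [isUnit_iff_ne_zero, Ne, ← exists_mulVec_eq_zero_iff]
  rintro ⟨v, hv, hEv⟩
  refine hnc ⟨v, fun i => ?_⟩
  obtain ⟨c, rfl⟩ := exists_eq_smul_of_proj_mulVec_eq_zero <|
    PosSemidef.mulVec_eq_zero_of_sum_mulVec_eq_zero
      (fun i _ => (isStarProjection_proj (x i)).posSemidef) hEv i (Finset.mem_univ i)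
  have hc : c ≠ 0 := by
    rintro rfl
    exact hv (zero_smul ℝ _)
  exact ⟨c⁻¹, by rw [smul_smul, inv_mul_cancel₀ hc, one_smul]⟩

theorem stmt4 {d m : ℕ} (x : Fin m → Fin d → ℝ) (hx : ∀ i, x i ≠ 0)
    (hnc : ¬ ∃ v : Fin d → ℝ, ∀ i, ∃ c : ℝ, x i = c • v)
    (D : Matrix (Fin m × Fin d) (Fin m × Fin d) ℝ)
    (hD : D = fun q r => if q.1 = r.1 then proj (x q.1) q.2 r.2 else 0)
    (F : Matrix (Fin m × Fin d) (Fin d) ℝ)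
    (hF : F = fun q b => proj (x q.1) q.2 b)
    (H : Matrix (Fin m × Fin d) (Fin m × Fin d) ℝ)
    (hH : H = D - F * (∑ i, proj (x i))⁻¹ * Fᵀ) :
    H.PosSemidef ∧ H.rank = d * m - m - d ∧
      ∀ (μ : ℝ) (z : Fin m × Fin d → ℝ), z ≠ 0 → H *ᵥ z = μ • z →
        μ = 0 ∨ μ = 1 := by
  have hP : ∀ i, IsStarProjection (proj (x i)) := fun i => isStarProjection_proj (x i)
  replace hD : D = blockDiagonalFst fun i => proj (x i) := hD
  replace hF : F = blockColumn fun i => proj (x i) := hF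
  have hE : Fᴴ * F = ∑ i, proj (x i) := by
    rw [hF, conjTranspose_blockColumn_mul_blockColumn]
    exact Finset.sum_congr rfl fun i _ => by
      rw [← star_eq_conjTranspose, (hP i).isSelfAdjoint.star_eq, (hP i).isIdempotentElem.eq]
  have hDF : D * F = F := by
    rw [hD, hF, blockDiagonalFst_mul_blockColumn]
    exact congrArg _ (funext fun i => (hP i).isIdempotentElem.eq)
  replace hH : H = D - F * (Fᴴ * F)⁻¹ * Fᴴ := by
    rw [hH, hE, conjTranspose_eq_transpose_of_trivial]
  have hdet : IsUnit (Fᴴ * F).det := hE ▸ isUnit_det_sum_proj hnc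
  have hHP : IsStarProjection H :=
    hH ▸ (hD ▸ IsStarProjection.blockDiagonalFst hP).sub_mul_inv_mul_conjTranspose hDF hdet
  refine ⟨hHP.posSemidef, ?_,
    fun μ z hz => hHP.isIdempotentElem.eq_zero_or_one_of_mulVec_eq_smul hz⟩
  have htrace : (H.rank : ℝ) = m * (d - 1) - d := by
    rw [hHP.isIdempotentElem.rank_eq_trace, hH, trace_sub, trace_mul_inv_mul_conjTranspose hdet,
      hD, trace_blockDiagonalFst]
    simp only [trace_proj (hx _), Finset.sum_const, Finset.card_univ, Fintype.card_fin,
      nsmul_eq_mul]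
  have hcast : ((H.rank + m + d : ℕ) : ℝ) = (d * m : ℕ) := by
    push_cast
    rw [htrace]
    ring
  have hrank := Nat.cast_injective hcast
  omega
end

section
/- With notation as in the previous lemma, the null space of H = D - F E^{-1} F^T equals the range of the dm x (m+d) matrix N whose i-th block row is [0 ... x_i ... 0, P(x_i)] (the vector x_i in the i-th column slot, followed by P(x_i)); moreover, N has full column rank m + d. -/
open Matrix

section Projection

variable {d : ℕ}

lemma proj_mulVec (x v : Fin d → ℝ) :
    proj x *ᵥ v = v - ((x ⬝ᵥ v) / (x ⬝ᵥ x)) • x := by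
  rw [proj, sub_mulVec, one_mulVec, smul_mulVec, vecMulVec_mulVec, op_smul_eq_smul, smul_smul,
    div_eq_inv_mul]

lemma proj_transpose (x : Fin d → ℝ) : (proj x)ᵀ = proj x := by
  simp [proj, transpose_vecMulVec]

lemma dotProduct_proj_mulVec_eq_zero (x v : Fin d → ℝ) : x ⬝ᵥ proj x *ᵥ v = 0 := by
  rcases eq_or_ne x 0 with rfl | hx
  · exact zero_dotProduct _
  have hxx : x ⬝ᵥ x ≠ 0 := mt dotProduct_self_eq_zero.mp hx
  rw [proj_mulVec, dotProduct_sub, dotProduct_smul, smul_eq_mul, div_mul_cancel₀ _ hxx, sub_self]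

lemma proj_mulVec_self (x : Fin d → ℝ) : proj x *ᵥ x = 0 := by
  rcases eq_or_ne x 0 with rfl | hx
  · exact mulVec_zero _
  rw [proj_mulVec, div_self (mt dotProduct_self_eq_zero.mp hx), one_smul, sub_self]

lemma proj_mulVec_proj_mulVec (x v : Fin d → ℝ) :
    proj x *ᵥ proj x *ᵥ v = proj x *ᵥ v := by
  conv_lhs => rw [proj_mulVec x v]
  rw [mulVec_sub, mulVec_smul, proj_mulVec_self, smul_zero, sub_zero]

lemma proj_mulVec_eq_zero_iff (x v : Fin d → ℝ) :
    proj x *ᵥ v = 0 ↔ ∃ c : ℝ, v = c • x := by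
  refine ⟨fun h => ⟨_, sub_eq_zero.mp ((proj_mulVec x v).symm.trans h)⟩, ?_⟩
  rintro ⟨c, rfl⟩
  rw [mulVec_smul, proj_mulVec_self, smul_zero]

lemma dotProduct_proj_mulVec_eq_dotProduct_self (x v : Fin d → ℝ) :
    v ⬝ᵥ proj x *ᵥ v = (proj x *ᵥ v) ⬝ᵥ (proj x *ᵥ v) := by
  nth_rw 2 [proj_mulVec x v]
  rw [sub_dotProduct, smul_dotProduct, dotProduct_proj_mulVec_eq_zero, smul_zero, sub_zero]

end Projection

section SumOfProjections

variable {ι : Type*} {d : ℕ} {x : ι → Fin d → ℝ}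

lemma eq_zero_of_forall_proj_mulVec_eq_zero
    (hnc : ¬ ∃ v : Fin d → ℝ, ∀ i, ∃ c : ℝ, x i = c • v) {v : Fin d → ℝ}
    (hv : ∀ i, proj (x i) *ᵥ v = 0) : v = 0 := by
  by_contra hv0
  refine hnc ⟨v, fun i => ?_⟩
  obtain ⟨c, hc⟩ := (proj_mulVec_eq_zero_iff _ v).mp (hv i)
  have hc0 : c ≠ 0 := by rintro rfl; exact hv0 (by simpa using hc)
  exact ⟨c⁻¹, by rw [hc, smul_smul, inv_mul_cancel₀ hc0, one_smul]⟩

variable [Fintype ι]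

lemma forall_proj_mulVec_eq_zero_of_sum_mulVec_eq_zero {v : Fin d → ℝ}
    (hv : (∑ i, proj (x i)) *ᵥ v = 0) (i : ι) : proj (x i) *ᵥ v = 0 := by
  have hsum : ∑ j, (proj (x j) *ᵥ v) ⬝ᵥ (proj (x j) *ᵥ v) = 0 := by
    simp_rw [← dotProduct_proj_mulVec_eq_dotProduct_self, ← dotProduct_sum, ← sum_mulVec, hv,
      dotProduct_zero]
  have hnonneg (j : ι) : 0 ≤ (proj (x j) *ᵥ v) ⬝ᵥ (proj (x j) *ᵥ v) :=
    Finset.sum_nonneg fun _ _ => mul_self_nonneg _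
  rw [Finset.sum_eq_zero_iff_of_nonneg fun j _ => hnonneg j] at hsum
  exact dotProduct_self_eq_zero.mp (hsum i (Finset.mem_univ i))

lemma isUnit_sum_proj (hnc : ¬ ∃ v : Fin d → ℝ, ∀ i, ∃ c : ℝ, x i = c • v) :
    IsUnit (∑ i, proj (x i)) := by
  rw [← mulVec_injective_iff_isUnit]
  exact LinearMap.ker_eq_bot.mp <| ker_mulVecLin_eq_bot_iff.mpr fun v hv =>
    eq_zero_of_forall_proj_mulVec_eq_zero hnc (forall_proj_mulVec_eq_zero_of_sum_mulVec_eq_zero hv)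

end SumOfProjections

noncomputable section

namespace ProjSchur

variable {ι : Type*} {d : ℕ} (x : ι → Fin d → ℝ)

def stackedProj : Matrix (ι × Fin d) (Fin d) ℝ :=
  fun q b => proj (x q.1) q.2 b

lemma curry_stackedProj_mulVec (u : Fin d → ℝ) (i : ι) :
    Function.curry (stackedProj x *ᵥ u) i = proj (x i) *ᵥ u :=
  rfl

lemma stackedProj_transpose_mulVec [Fintype ι] (z : ι × Fin d → ℝ) :
    (stackedProj x)ᵀ *ᵥ z = ∑ i, proj (x i) *ᵥ Function.curry z i := by
  funext b
  simp only [mulVec, dotProduct, transpose_apply, Fintype.sum_prod_type, Finset.sum_apply]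
  refine Finset.sum_congr rfl fun i _ => Finset.sum_congr rfl fun a _ => ?_
  rw [← proj_transpose (x i)]
  rfl

variable [DecidableEq ι]

def blockDiagProj : Matrix (ι × Fin d) (ι × Fin d) ℝ :=
  fun q r => if q.1 = r.1 then proj (x q.1) q.2 r.2 else 0

def kernelMatrix : Matrix (ι × Fin d) (ι ⊕ Fin d) ℝ :=
  fun q c => Sum.elim (fun j => if q.1 = j then x q.1 q.2 else 0) (fun b => proj (x q.1) q.2 b) c

variable [Fintype ι]

def projSchur : Matrix (ι × Fin d) (ι × Fin d) ℝ :=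
  blockDiagProj x - stackedProj x * (∑ i, proj (x i))⁻¹ * (stackedProj x)ᵀ

lemma curry_blockDiagProj_mulVec (z : ι × Fin d → ℝ) (i : ι) :
    Function.curry (blockDiagProj x *ᵥ z) i = proj (x i) *ᵥ Function.curry z i := by
  funext a
  simp [blockDiagProj, mulVec, dotProduct, Fintype.sum_prod_type, ite_mul]

lemma curry_kernelMatrix_mulVec (w : ι ⊕ Fin d → ℝ) (i : ι) :
    Function.curry (kernelMatrix x *ᵥ w) i =
      w (.inl i) • x i + proj (x i) *ᵥ (w ∘ .inr) := by
  funext a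
  simp [kernelMatrix, mulVec, dotProduct, Fintype.sum_sum_type, ite_mul, mul_comm]

variable {x}

lemma curry_projSchur_mulVec (z : ι × Fin d → ℝ) (i : ι) :
    Function.curry (projSchur x *ᵥ z) i = proj (x i) *ᵥ (Function.curry z i -
      (∑ j, proj (x j))⁻¹ *ᵥ ∑ j, proj (x j) *ᵥ Function.curry z j) := by
  rw [projSchur, sub_mulVec, ← mulVec_mulVec, ← mulVec_mulVec, stackedProj_transpose_mulVec,
    mulVec_sub]
  exact congrArg₂ (· - ·) (curry_blockDiagProj_mulVec x z i) (curry_stackedProj_mulVec x _ i)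

lemma exists_kernelMatrix_mulVec_eq_of_projSchur_mulVec_eq_zero {z : ι × Fin d → ℝ}
    (hz : projSchur x *ᵥ z = 0) : ∃ w, kernelMatrix x *ᵥ w = z := by
  set u := (∑ j, proj (x j))⁻¹ *ᵥ ∑ j, proj (x j) *ᵥ Function.curry z j
  have hblock (i : ι) : proj (x i) *ᵥ (Function.curry z i - u) = 0 := by
    rw [← curry_projSchur_mulVec, hz]
    rfl
  choose c hc using fun i => (proj_mulVec_eq_zero_iff _ _).mp (hblock i)
  refine ⟨Sum.elim (fun i => c i + (x i ⬝ᵥ u) / (x i ⬝ᵥ x i)) u,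
    Function.curry_injective (funext fun i => ?_)⟩
  rw [curry_kernelMatrix_mulVec, Sum.elim_inl, Sum.elim_comp_inr, proj_mulVec,
    sub_eq_iff_eq_add.mp (hc i)]
  module

lemma projSchur_mulVec_kernelMatrix_mulVec (hE : IsUnit (∑ i, proj (x i)))
    (w : ι ⊕ Fin d → ℝ) : projSchur x *ᵥ (kernelMatrix x *ᵥ w) = 0 := by
  have hblock (i : ι) :
      proj (x i) *ᵥ Function.curry (kernelMatrix x *ᵥ w) i = proj (x i) *ᵥ (w ∘ .inr) := by
    rw [curry_kernelMatrix_mulVec, mulVec_add, mulVec_smul, proj_mulVec_self, smul_zero, zero_add,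
      proj_mulVec_proj_mulVec]
  have hu : (∑ j, proj (x j))⁻¹ *ᵥ
      ∑ j, proj (x j) *ᵥ Function.curry (kernelMatrix x *ᵥ w) j = w ∘ .inr := by
    simp_rw [hblock, ← sum_mulVec, mulVec_mulVec,
      nonsing_inv_mul _ ((isUnit_iff_isUnit_det _).mp hE), one_mulVec]
  refine Function.curry_injective (funext fun i => ?_)
  rw [curry_projSchur_mulVec, hu, mulVec_sub, hblock, sub_self]
  rfl

lemma projSchur_mulVec_eq_zero_iff
    (hnc : ¬ ∃ v : Fin d → ℝ, ∀ i, ∃ c : ℝ, x i = c • v)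
    (z : ι × Fin d → ℝ) : projSchur x *ᵥ z = 0 ↔ ∃ w, kernelMatrix x *ᵥ w = z := by
  refine ⟨exists_kernelMatrix_mulVec_eq_of_projSchur_mulVec_eq_zero, ?_⟩
  rintro ⟨w, rfl⟩
  exact projSchur_mulVec_kernelMatrix_mulVec (isUnit_sum_proj hnc) w

lemma eq_zero_of_kernelMatrix_mulVec_eq_zero (hx : ∀ i, x i ≠ 0)
    (hnc : ¬ ∃ v : Fin d → ℝ, ∀ i, ∃ c : ℝ, x i = c • v) {w : ι ⊕ Fin d → ℝ}
    (hw : kernelMatrix x *ᵥ w = 0) : w = 0 := by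
  have hblock (i : ι) : w (.inl i) • x i + proj (x i) *ᵥ (w ∘ .inr) = 0 := by
    rw [← curry_kernelMatrix_mulVec, hw]
    rfl
  have hcoef (i : ι) : w (.inl i) = 0 := by
    have h := congrArg (x i ⬝ᵥ ·) (hblock i)
    simp only [dotProduct_add, dotProduct_smul, dotProduct_proj_mulVec_eq_zero, dotProduct_zero,
      add_zero, smul_eq_mul] at h
    exact (mul_eq_zero.mp h).resolve_right (mt dotProduct_self_eq_zero.mp (hx i))
  have hv : w ∘ .inr = 0 := eq_zero_of_forall_proj_mulVec_eq_zero hnc fun i => by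
    simpa [hcoef i] using hblock i
  funext s
  cases s with
  | inl i => exact hcoef i
  | inr b => exact congrFun hv b

lemma rank_kernelMatrix (hx : ∀ i, x i ≠ 0)
    (hnc : ¬ ∃ v : Fin d → ℝ, ∀ i, ∃ c : ℝ, x i = c • v) :
    (kernelMatrix x).rank = Fintype.card ι + d := by
  have hinj : Function.Injective (kernelMatrix x).mulVecLin := LinearMap.ker_eq_bot.mp <|
    ker_mulVecLin_eq_bot_iff.mpr fun _ => eq_zero_of_kernelMatrix_mulVec_eq_zero hx hnc
  rw [rank, LinearMap.finrank_range_of_inj hinj, Module.finrank_fintype_fun_eq_card,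
    Fintype.card_sum, Fintype.card_fin]

end ProjSchur

end

open ProjSchur in
theorem stmt5 {d m : ℕ} (x : Fin m → Fin d → ℝ) (hx : ∀ i, x i ≠ 0)
    (hnc : ¬ ∃ v : Fin d → ℝ, ∀ i, ∃ c : ℝ, x i = c • v)
    (D : Matrix (Fin m × Fin d) (Fin m × Fin d) ℝ)
    (hD : D = fun q r => if q.1 = r.1 then proj (x q.1) q.2 r.2 else 0)
    (F : Matrix (Fin m × Fin d) (Fin d) ℝ)
    (hF : F = fun q b => proj (x q.1) q.2 b)
    (H : Matrix (Fin m × Fin d) (Fin m × Fin d) ℝ)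
    (hH : H = D - F * (∑ i, proj (x i))⁻¹ * Fᵀ)
    (N : Matrix (Fin m × Fin d) (Fin m ⊕ Fin d) ℝ)
    (hN : N = fun q c =>
      Sum.elim (fun j => if q.1 = j then x q.1 q.2 else 0)
               (fun b => proj (x q.1) q.2 b) c) :
    (∀ z : Fin m × Fin d → ℝ,
      H *ᵥ z = 0 ↔ ∃ w : Fin m ⊕ Fin d → ℝ, N *ᵥ w = z) ∧
    N.rank = m + d := by
  obtain rfl : D = blockDiagProj x := hD
  obtain rfl : F = stackedProj x := hF
  obtain rfl : H = projSchur x := hH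
  obtain rfl : N = kernelMatrix x := hN
  exact ⟨projSchur_mulVec_eq_zero_iff hnc, by simpa using rank_kernelMatrix hx hnc⟩
end
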